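/- arXiv:2103.01604 — 5 statements merged into one kernel-verified Lean document; each statement's English description precedes it below -/
import Mathlib

section
/- Let m ≥ 0 and let 0 = T_0 < T_1 < ⋯ < T_{m+1} = T be integers. Let μ_1, …, μ_{m+1} ∈ ℝ and define μ(t) = μ_j for T_{j−1} < t ≤ T_j, r_j = (T_j − T_{j−1})/T, and d* = (1/2) ∑_{j1 ≠ j2} r_{j1} r_{j2} (μ_{j2} − μ_{j1})² (sum over ordered pairs j1 ≠ j2 in {1, …, m+1}). Then for every integer k with 0 ≤ k < T, | (1/T) ∑_{t=k+1}^{T} μ(t) μ(t−k) − (∑_{j=1}^{m+1} r_j μ_j)² − d* | ≤ (2m+1) k (max_{1 ≤ j ≤ m+1} μ_j²) / T. Hence for each fixed k the mean component of the lag-k sample autocovariance converges to (∑_j r_j μ_j)² + d* as T → ∞, with d* independent of k. -/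
/-!
Except at the `t` lying within `k` steps after one of the `m` interior break dates, `t` and
`t - k` fall in the same regime, so `μ t * μ (t - k) = μ t ^ 2`; each exceptional term is off by
at most `2 max μ_j²`, and the `k` initial squares dropped by the lag cost at most `k max μ_j²`.
What remains is `(1/T) ∑ μ(t)² = ∑ r_j μ_j²`, which is `(∑ r_j μ_j)² + d*` by the weighted
variance identity, since `∑ r_j = 1`.
-/

open Finset

section Regimes

variable {Tb : ℕ → ℕ} {n : ℕ}

theorem exists_regime_of_mem_Ioc {t : ℕ} (ht : t ∈ Ioc (Tb 0) (Tb n)) :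
    ∃ j, 1 ≤ j ∧ j ≤ n ∧ Tb (j - 1) < t ∧ t ≤ Tb j := by
  classical
  obtain ⟨ht0, htn⟩ := mem_Ioc.mp ht
  have hex : ∃ j, t ≤ Tb j := ⟨n, htn⟩
  have hpos : Nat.find hex ≠ 0 := fun h => ht0.not_ge (h ▸ Nat.find_spec hex)
  exact ⟨Nat.find hex, by omega, Nat.find_min' hex htn,
    not_le.mp (Nat.find_min hex (by omega)), Nat.find_spec hex⟩

theorem sum_Ioc_eq_sum_regimes (hTb : MonotoneOn Tb (Set.Iic n)) {g c : ℕ → ℝ}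
    (hg : ∀ j, 1 ≤ j → j ≤ n → ∀ t, Tb (j - 1) < t → t ≤ Tb j → g t = c j) :
    ∑ t ∈ Ioc (Tb 0) (Tb n), g t = ∑ j ∈ Icc 1 n, ((Tb j : ℝ) - Tb (j - 1)) * c j := by
  induction n with
  | zero => simp
  | succ n ih =>
    have h0n : Tb 0 ≤ Tb n := hTb (by simp) (by simp) (Nat.zero_le n)
    have hnn : Tb n ≤ Tb (n + 1) := hTb (by simp) (by simp) n.le_succ
    have hc : ∀ t ∈ Ioc (Tb n) (Tb (n + 1)), g t = c (n + 1) := fun t ht =>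
      hg (n + 1) le_add_self le_rfl t (mem_Ioc.mp ht).1 (mem_Ioc.mp ht).2
    have hlast : ∑ t ∈ Ioc (Tb n) (Tb (n + 1)), g t = ((Tb (n + 1) : ℝ) - Tb n) * c (n + 1) := by
      rw [sum_congr rfl hc, sum_const, Nat.card_Ioc, nsmul_eq_mul, Nat.cast_sub hnn]
    rw [← sum_Ioc_consecutive g h0n hnn, sum_Icc_succ_top (by omega), hlast,
      ih (hTb.mono (Set.Iic_subset_Iic.mpr n.le_succ)) fun j h1 h2 => hg j h1 (by omega)]
    rfl

theorem sum_Ioc_eq_mul_sum_weights (hTb : MonotoneOn Tb (Set.Iic n)) {T : ℝ} (hT : T ≠ 0)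
    {r : ℕ → ℝ} (hr : ∀ j, 1 ≤ j → r j = ((Tb j : ℝ) - Tb (j - 1)) / T) {g c : ℕ → ℝ}
    (hg : ∀ j, 1 ≤ j → j ≤ n → ∀ t, Tb (j - 1) < t → t ≤ Tb j → g t = c j) :
    ∑ t ∈ Ioc (Tb 0) (Tb n), g t = T * ∑ j ∈ Icc 1 n, r j * c j := by
  rw [sum_Ioc_eq_sum_regimes hTb hg, mul_sum]
  refine sum_congr rfl fun j hj => ?_
  rw [hr j (mem_Icc.mp hj).1]
  field_simp

theorem forall_mem_Ioc_of_regimes {g c : ℕ → ℝ} {p : ℝ → Prop}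
    (hg : ∀ j, 1 ≤ j → j ≤ n → ∀ t, Tb (j - 1) < t → t ≤ Tb j → g t = c j)
    (hc : ∀ j ∈ Icc 1 n, p (c j)) : ∀ t ∈ Ioc (Tb 0) (Tb n), p (g t) := by
  intro t ht
  obtain ⟨j, hj1, hjn, hjt, htj⟩ := exists_regime_of_mem_Ioc ht
  rw [hg j hj1 hjn t hjt htj]
  exact hc j (mem_Icc.mpr ⟨hj1, hjn⟩)

end Regimes

theorem half_sum_sum_ne_mul_sq_sub {ι : Type*} [DecidableEq ι] (s : Finset ι) (w x : ι → ℝ) :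
    (1 / 2) * ∑ i ∈ s, ∑ j ∈ s, (if i ≠ j then w i * w j * (x j - x i) ^ 2 else 0)
      = (∑ i ∈ s, w i) * ∑ i ∈ s, w i * x i ^ 2 - (∑ i ∈ s, w i * x i) ^ 2 := by
  have hexpand : ∀ i j, (if i ≠ j then w i * w j * (x j - x i) ^ 2 else 0)
      = w i * (w j * x j ^ 2) + w j * (w i * x i ^ 2) - 2 * (w i * x i) * (w j * x j) := by
    intro i j
    split_ifs with h
    · ring
    · rw [not_not.mp h]; ring
  simp only [hexpand, sum_add_distrib, sum_sub_distrib, ← mul_sum, ← sum_mul]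
  ring

theorem abs_sum_le_card_mul_of_ne_zero_mem {ι : Type*} {s U : Finset ι} {f : ι → ℝ} {C : ℝ}
    (hC : 0 ≤ C) (hU : ∀ i ∈ s, f i ≠ 0 → i ∈ U) (hf : ∀ i ∈ s, |f i| ≤ C) :
    |∑ i ∈ s, f i| ≤ #U * C := by
  classical
  have hsub : s.filter (· ∈ U) ⊆ U := fun i hi => (mem_filter.mp hi).2
  rw [← sum_filter_of_ne hU]
  calc |∑ i ∈ s.filter (· ∈ U), f i| ≤ ∑ i ∈ s.filter (· ∈ U), |f i| := abs_sum_le_sum_abs _ _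
    _ ≤ #(s.filter (· ∈ U)) * C := by
        simpa using sum_le_card_nsmul _ _ _ fun i hi => hf i (mem_filter.mp hi).1
    _ ≤ #U * C := by gcongr

theorem abs_mul_sub_sq_le {a b M : ℝ} (ha : a ^ 2 ≤ M) (hb : b ^ 2 ≤ M) :
    |a * b - a ^ 2| ≤ 2 * M := by
  rw [abs_le]
  constructor <;> nlinarith [sq_nonneg (a - b), sq_nonneg (a + b)]

section Lag

variable {Tb : ℕ → ℕ} {m k : ℕ}

def breakWindows (Tb : ℕ → ℕ) (m k : ℕ) : Finset ℕ :=
  (Icc 1 m).biUnion fun j => Ioc (Tb j) (Tb j + k)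

theorem card_breakWindows_le : #(breakWindows Tb m k) ≤ m * k := by
  simpa [breakWindows] using card_biUnion_le_card_mul (Icc 1 m) (fun j => Ioc (Tb j) (Tb j + k)) k
    fun j _ => by simp

theorem mem_breakWindows_of_ne {g μ : ℕ → ℝ} (h0 : Tb 0 = 0)
    (hg : ∀ j, 1 ≤ j → j ≤ m + 1 → ∀ t, Tb (j - 1) < t → t ≤ Tb j → g t = μ j)
    {t : ℕ} (ht : t ∈ Ioc k (Tb (m + 1))) (hne : g (t - k) ≠ g t) :
    t ∈ breakWindows Tb m k := by
  obtain ⟨hkt, htT⟩ := mem_Ioc.mp ht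
  obtain ⟨j, hj1, hjm, hjt, htj⟩ :=
    exists_regime_of_mem_Ioc (Tb := Tb) (n := m + 1) (mem_Ioc.mpr ⟨by rw [h0]; omega, htT⟩)
  have hshift : t - k ≤ Tb (j - 1) := by
    by_contra! h
    exact hne (by rw [hg j hj1 hjm _ h (by omega), hg j hj1 hjm t hjt htj])
  have hj : j - 1 ≠ 0 := fun h => by rw [h, h0] at hshift; omega
  exact mem_biUnion.mpr ⟨j - 1, mem_Icc.mpr ⟨by omega, by omega⟩, mem_Ioc.mpr ⟨hjt, by omega⟩⟩

theorem abs_sum_lag_mul_sub_sum_sq_le {g μ : ℕ → ℝ} {M : ℝ} (h0 : Tb 0 = 0)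
    (hg : ∀ j, 1 ≤ j → j ≤ m + 1 → ∀ t, Tb (j - 1) < t → t ≤ Tb j → g t = μ j)
    (hM0 : 0 ≤ M) (hM : ∀ t ∈ Ioc 0 (Tb (m + 1)), g t ^ 2 ≤ M) (hk : k ≤ Tb (m + 1)) :
    |∑ t ∈ Ioc k (Tb (m + 1)), g t * g (t - k) - ∑ t ∈ Ioc 0 (Tb (m + 1)), g t ^ 2|
      ≤ (2 * m + 1) * k * M := by
  have hlag : |∑ t ∈ Ioc k (Tb (m + 1)), (g t * g (t - k) - g t ^ 2)|
      ≤ #(breakWindows Tb m k) * (2 * M) := by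
    refine abs_sum_le_card_mul_of_ne_zero_mem (by positivity)
      (fun t ht hne => mem_breakWindows_of_ne h0 hg ht fun h => hne (by rw [h]; ring))
      fun t ht => abs_mul_sub_sq_le (hM t ?_) (hM (t - k) ?_) <;>
    · obtain ⟨hkt, htT⟩ := mem_Ioc.mp ht
      exact mem_Ioc.mpr ⟨by omega, by omega⟩
  have hhead : |∑ t ∈ Ioc 0 k, g t ^ 2| ≤ #(Ioc 0 k) * M :=
    abs_sum_le_card_mul_of_ne_zero_mem hM0 (fun t ht _ => ht) fun t ht => by
      rw [abs_sq]; exact hM t (Ioc_subset_Ioc_right hk ht)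
  have hcard : (#(breakWindows Tb m k) : ℝ) ≤ m * k := by exact_mod_cast card_breakWindows_le
  rw [← sum_Ioc_consecutive _ (Nat.zero_le k) hk]
  calc _ = |∑ t ∈ Ioc k (Tb (m + 1)), (g t * g (t - k) - g t ^ 2) - ∑ t ∈ Ioc 0 k, g t ^ 2| := by
        rw [sum_sub_distrib]; ring_nf
    _ ≤ _ := abs_sub _ _
    _ ≤ m * k * (2 * M) + k * M := add_le_add (hlag.trans (by gcongr)) (by simpa using hhead)
    _ = _ := by ring

end Lag

/-- With break dates `0 = Tb 0 < Tb 1 < ⋯ < Tb (m+1) = T`, regime means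
`μ j` (j = 1, …, m+1), the piecewise-constant mean `μfun` (`μfun t = μ j` for
`Tb (j-1) < t ≤ Tb j`), relative lengths `r j = (Tb j - Tb (j-1)) / T`, and
`dstar = (1/2) ∑_{j1 ≠ j2} r j1 * r j2 * (μ j2 - μ j1)²`, for every `0 ≤ k < T` the
mean component of the lag-`k` sample autocovariance satisfies
`|(1/T) ∑_{t=k+1}^{T} μfun t * μfun (t-k) - (∑ j r j μ j)² - dstar|
  ≤ (2m+1) k (max_j μ j ²) / T`. -/
theorem stmt_1 (m T : ℕ) (Tb : ℕ → ℕ) (μ μfun : ℕ → ℝ)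
    (h0 : Tb 0 = 0) (hlast : Tb (m + 1) = T)
    (hmono : ∀ j, j ≤ m → Tb j < Tb (j + 1))
    (hμfun : ∀ j, 1 ≤ j → j ≤ m + 1 → ∀ t, Tb (j - 1) < t → t ≤ Tb j → μfun t = μ j)
    (r : ℕ → ℝ) (hr : ∀ j, 1 ≤ j → r j = ((Tb j : ℝ) - (Tb (j - 1) : ℝ)) / T)
    (dstar : ℝ)
    (hd : dstar = (1 / 2) * ∑ j1 ∈ Finset.Icc 1 (m + 1), ∑ j2 ∈ Finset.Icc 1 (m + 1),
        if j1 ≠ j2 then r j1 * r j2 * (μ j2 - μ j1) ^ 2 else 0)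
    (k : ℕ) (hk : k < T) :
    |(T : ℝ)⁻¹ * (∑ t ∈ Finset.Icc (k + 1) T, μfun t * μfun (t - k))
        - (∑ j ∈ Finset.Icc 1 (m + 1), r j * μ j) ^ 2 - dstar|
      ≤ (2 * (m : ℝ) + 1) * (k : ℝ) *
          ((Finset.Icc 1 (m + 1)).sup' (Finset.nonempty_Icc.mpr (by omega)) fun j => μ j ^ 2)
          / (T : ℝ) := by
  set M := (Icc 1 (m + 1)).sup' (nonempty_Icc.mpr (by omega)) fun j => μ j ^ 2
  have hT : (0 : ℝ) < T := by exact_mod_cast hk.trans_le' (Nat.zero_le k)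
  have hTb : MonotoneOn Tb (Set.Iic (m + 1)) :=
    (strictMonoOn_Iic_of_lt_succ fun j hj => hmono j (by omega)).monotoneOn
  have hr_sum : ∑ j ∈ Icc 1 (m + 1), r j = 1 := by
    have h := sum_Ioc_eq_mul_sum_weights hTb hT.ne' hr (g := fun _ => 1) (c := fun _ => 1)
      fun _ _ _ _ _ _ => rfl
    rw [h0, hlast] at h
    simpa [hT.ne'] using h.symm
  have hsq : ∑ t ∈ Ioc 0 T, μfun t ^ 2 = T * ∑ j ∈ Icc 1 (m + 1), r j * μ j ^ 2 := by
    have h := sum_Ioc_eq_mul_sum_weights hTb hT.ne' hr (g := fun t => μfun t ^ 2)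
      (c := fun j => μ j ^ 2) fun j h1 h2 t ht1 ht2 => by rw [hμfun j h1 h2 t ht1 ht2]
    rwa [h0, hlast] at h
  have hM0 : 0 ≤ M := (sq_nonneg (μ 1)).trans (le_sup' (fun j => μ j ^ 2) (by simp))
  have hM : ∀ t ∈ Ioc 0 (Tb (m + 1)), μfun t ^ 2 ≤ M := by
    have h := forall_mem_Ioc_of_regimes (p := (· ^ 2 ≤ M)) hμfun fun j hj =>
      le_sup' (fun j => μ j ^ 2) hj
    rwa [h0] at h
  have hlag := abs_sum_lag_mul_sub_sum_sq_le h0 hμfun hM0 hM (k := k) (by omega)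
  rw [hlast] at hlag
  rw [hd, half_sum_sum_ne_mul_sq_sub, hr_sum, one_mul, Icc_add_one_left_eq_Ioc]
  calc _ = |(T : ℝ)⁻¹ * (∑ t ∈ Ioc k T, μfun t * μfun (t - k) - ∑ t ∈ Ioc 0 T, μfun t ^ 2)| := by
        rw [hsq]
        congr 1
        field_simp
        ring
    _ = (T : ℝ)⁻¹ * |∑ t ∈ Ioc k T, μfun t * μfun (t - k) - ∑ t ∈ Ioc 0 T, μfun t ^ 2| := by
        rw [abs_mul, abs_of_pos (inv_pos.mpr hT)]
    _ ≤ (T : ℝ)⁻¹ * ((2 * m + 1) * k * M) := by gcongr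
    _ = _ := by ring
end

section
/- For every integer n ≥ 2 there exists a constant C > 0 (depending only on n) such that for every δ ∈ (0, π) and every integer T ≥ 2, ∫_{D^c} |Ψ_T^{(n)}(x_1, …, x_n)| dx_1 ⋯ dx_{n−1} ≤ C (log T)^{n−1} / (T sin(δ/2)), where D = {x ∈ Π^{n−1} : |x_j| ≤ δ for all j = 1, …, n−1}, D^c is its complement in Π^{n−1}, and x_n = −∑_{j=1}^{n−1} x_j. -/
/-! With `D_T y = |∑_{t=1}^T e^{ity}|`, the kernel factorizes as
`|Ψ| = ((2π)^m T)⁻¹ D_T x₁ ⋯ D_T xₘ · D_T (x₁ + ⋯ + xₘ)` (using that `D_T` is even).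
Off `D` some coordinate satisfies `δ < |x_j| ≤ π`, where `D_T x_j ≤ 1 / sin (δ/2)`.
In the remaining product, integrating first in `x_j` turns `D_T (x₁ + ⋯ + xₘ)` into the integral
of a translate of the `2π`-periodic `D_T`, so every coordinate contributes `∫_Π D_T`,
and `∫_Π D_T ≤ 8π log T` follows from `D_T y ≤ min T (π / |y|)`. -/

open Real Finset MeasureTheory
open scoped ENNReal

noncomputable def dirichletNorm (T : ℕ) (y : ℝ) : ℝ :=
  ‖∑ t ∈ Icc 1 T, Complex.exp (Complex.I * t * y)‖

lemma dirichletNorm_nonneg (T : ℕ) (y : ℝ) : 0 ≤ dirichletNorm T y := norm_nonneg _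

@[fun_prop]
lemma continuous_dirichletNorm (T : ℕ) : Continuous (dirichletNorm T) := by
  unfold dirichletNorm
  fun_prop

lemma dirichletNorm_neg (T : ℕ) (y : ℝ) : dirichletNorm T (-y) = dirichletNorm T y := by
  rw [dirichletNorm, dirichletNorm, ← Complex.norm_conj, map_sum]
  congr 1
  refine sum_congr rfl fun t _ => ?_
  rw [← Complex.exp_conj]
  simp

lemma periodic_dirichletNorm (T : ℕ) : Function.Periodic (dirichletNorm T) (2 * π) := by
  intro y
  unfold dirichletNorm
  congr 1
  refine sum_congr rfl fun t _ => ?_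
  rw [show Complex.I * t * ↑(y + 2 * π) = Complex.I * t * y + (t : ℤ) * (2 * π * Complex.I) by
    push_cast; ring, Complex.exp_add, Complex.exp_int_mul_two_pi_mul_I, mul_one]

lemma dirichletNorm_le (T : ℕ) (y : ℝ) : dirichletNorm T y ≤ T := by
  refine (norm_sum_le _ _).trans_eq ?_
  simp_rw [mul_assoc, ← Complex.ofReal_natCast, ← Complex.ofReal_mul, Complex.norm_exp_I_mul_ofReal]
  simp

lemma dirichletNorm_le_inv_abs_sin (T : ℕ) {y : ℝ} (hy : sin (y / 2) ≠ 0) :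
    dirichletNorm T y ≤ |sin (y / 2)|⁻¹ := by
  set r := Complex.exp (Complex.I * y)
  have hr : ‖r‖ = 1 := Complex.norm_exp_I_mul_ofReal y
  have hr1 : ‖r - 1‖ = 2 * |sin (y / 2)| := by
    rw [Complex.norm_exp_I_mul_ofReal_sub_one, norm_mul, Real.norm_two, Real.norm_eq_abs]
  have hsum : ∑ t ∈ Icc 1 T, Complex.exp (Complex.I * t * y) = r * ((r ^ T - 1) / (r - 1)) := by
    have hr1' : r ≠ 1 := fun h => by simp [h, hy] at hr1
    rw [← geom_sum_eq hr1', mul_sum, ← Ico_add_one_right_eq_Icc, sum_Ico_eq_sum_range]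
    refine sum_congr rfl fun t _ => ?_
    rw [← pow_succ', ← Complex.exp_nat_mul, add_comm]
    push_cast; ring_nf
  have hnum : ‖r ^ T - 1‖ ≤ 2 := (norm_sub_le _ _).trans (by simp [hr]; norm_num)
  rw [dirichletNorm, hsum, norm_mul, hr, one_mul, norm_div, hr1, div_le_iff₀ (by positivity)]
  calc ‖r ^ T - 1‖ ≤ 2 := hnum
    _ = |sin (y / 2)|⁻¹ * (2 * |sin (y / 2)|) := by field_simp [abs_pos.mpr hy]

lemma dirichletNorm_le_inv_sin_of_lt_abs (T : ℕ) {δ y : ℝ} (hδ : 0 < δ) (hy : δ < |y|)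
    (hyπ : |y| ≤ π) : dirichletNorm T y ≤ (sin (δ / 2))⁻¹ := by
  have hsδ : 0 < sin (δ / 2) := sin_pos_of_pos_of_lt_pi (by linarith) (by linarith)
  have hmono : sin (δ / 2) ≤ sin (|y| / 2) :=
    sin_le_sin_of_le_of_le_pi_div_two (by linarith) (by linarith) (by linarith)
  have habs : dirichletNorm T y = dirichletNorm T |y| := by
    rcases abs_choice y with h | h <;> rw [h]
    exact (dirichletNorm_neg T y).symm
  rw [habs]
  refine (dirichletNorm_le_inv_abs_sin T (hsδ.trans_le hmono).ne').trans ?_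
  rw [abs_of_pos (hsδ.trans_le hmono)]
  exact inv_anti₀ hsδ hmono

lemma dirichletNorm_le_pi_div (T : ℕ) {y : ℝ} (hy : 0 < y) (hyπ : y ≤ π) :
    dirichletNorm T y ≤ π / y := by
  have hs : 0 < sin (y / 2) := sin_pos_of_pos_of_lt_pi (by linarith) (by linarith [pi_pos])
  have hjordan : y / π ≤ sin (y / 2) := by
    have := mul_le_sin (x := y / 2) (by linarith) (by linarith)
    rwa [show 2 / π * (y / 2) = y / π by ring] at this
  calc dirichletNorm T y ≤ (sin (y / 2))⁻¹ := by
        simpa [abs_of_pos hs] using dirichletNorm_le_inv_abs_sin T hs.ne'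
    _ ≤ (y / π)⁻¹ := inv_anti₀ (by positivity) hjordan
    _ = π / y := inv_div _ _

lemma integral_dirichletNorm_tail_le (T : ℕ) (hT : 0 < T) (hTπ : 1 / (T : ℝ) ≤ π) :
    ∫ y in (1 / (T : ℝ))..π, dirichletNorm T y ≤ π * log (π * T) := by
  have hT0 : (0 : ℝ) < 1 / T := by positivity
  calc ∫ y in (1 / (T : ℝ))..π, dirichletNorm T y ≤ ∫ y in (1 / (T : ℝ))..π, π * y⁻¹ := by
        refine intervalIntegral.integral_mono_on hTπ
          ((continuous_dirichletNorm T).intervalIntegrable _ _) ?_ fun y hy => ?_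
        · exact (continuousOn_const.mul (continuousOn_inv₀.mono fun y hy =>
            (hT0.trans_le hy.1).ne')).intervalIntegrable_of_Icc hTπ
        · exact (dirichletNorm_le_pi_div T (hT0.trans_le hy.1) hy.2).trans_eq (div_eq_mul_inv _ _)
    _ = π * log (π * T) := by
        rw [intervalIntegral.integral_const_mul, integral_inv_of_pos hT0 pi_pos,
          div_div_eq_mul_div, div_one]

lemma integral_dirichletNorm_le (T : ℕ) (hT : 2 ≤ T) :
    ∫ y in (-π)..π, dirichletNorm T y ≤ 8 * π * log T := by
  have hT0 : (0 : ℝ) < T := by positivity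
  have hT2 : (2 : ℝ) ≤ T := by exact_mod_cast hT
  have hTπ : 1 / (T : ℝ) ≤ π := by
    rw [div_le_iff₀ hT0]; nlinarith [pi_gt_three]
  have hint : ∀ a b : ℝ, IntervalIntegrable (dirichletNorm T) volume a b :=
    fun a b => (continuous_dirichletNorm T).intervalIntegrable a b
  have hleft : ∫ y in (-π)..(-(1 / (T : ℝ))), dirichletNorm T y
      = ∫ y in (1 / (T : ℝ))..π, dirichletNorm T y := by
    simpa only [dirichletNorm_neg, neg_neg] using
      (intervalIntegral.integral_comp_neg (a := 1 / (T : ℝ)) (b := π) (dirichletNorm T)).symm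
  have hmid : ∫ y in (-(1 / (T : ℝ)))..(1 / (T : ℝ)), dirichletNorm T y ≤ 2 := by
    calc ∫ y in (-(1 / (T : ℝ)))..(1 / (T : ℝ)), dirichletNorm T y
        ≤ ∫ _ in (-(1 / (T : ℝ)))..(1 / (T : ℝ)), (T : ℝ) :=
          intervalIntegral.integral_mono_on (by linarith [hTπ, one_div_pos.mpr hT0])
            (hint _ _) intervalIntegrable_const fun y _ => dirichletNorm_le T y
      _ = 2 := by simp; field_simp; ring
  have htail := integral_dirichletNorm_tail_le T (by omega) hTπ
  have hlog : log (π * T) ≤ 3 * log T := by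
    have hcube : π * T ≤ T ^ 3 := calc
      π * T ≤ T ^ 2 * T := by gcongr; nlinarith [pi_lt_four]
      _ = T ^ 3 := by ring
    calc log (π * T) ≤ log (T ^ 3) := log_le_log (by positivity) hcube
      _ = 3 * log T := by rw [log_pow]; norm_num
  have hlog2 : 1 ≤ π * log T := by
    have := log_le_log (by norm_num) hT2
    nlinarith [log_two_gt_d9, pi_gt_three]
  rw [← intervalIntegral.integral_add_adjacent_intervals (hint (-π) (-(1 / T))) (hint _ π),
    ← intervalIntegral.integral_add_adjacent_intervals (hint (-(1 / T)) (1 / T)) (hint _ π), hleft]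
  linarith [mul_le_mul_of_nonneg_left hlog pi_pos.le]

lemma Function.Periodic.setLIntegral_Ioc_comp_add_right {g : ℝ → ℝ≥0∞} {c : ℝ}
    (hg : Function.Periodic g c) (hc : 0 < c) (t s : ℝ) :
    ∫⁻ y in Set.Ioc t (t + c), g (y + s) = ∫⁻ y in Set.Ioc t (t + c), g y := by
  have : VAddInvariantMeasure (AddSubgroup.zmultiples c) ℝ volume :=
    ⟨fun _ _ _ => measure_preimage_add _ _ _⟩
  calc ∫⁻ y in Set.Ioc t (t + c), g (y + s) = ∫⁻ y in Set.Ioc (t - s) (t - s + c), g (y + s) :=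
        (isAddFundamentalDomain_Ioc hc t).setLIntegral_eq (isAddFundamentalDomain_Ioc hc (t - s))
          _ (hg.add_const s).map_vadd_zmultiples
    _ = ∫⁻ y in (· + s) ⁻¹' Set.Ioc t (t + c), g (y + s) := by
        rw [Set.preimage_add_const_Ioc, sub_add_eq_add_sub]
    _ = ∫⁻ y in Set.Ioc t (t + c), g y :=
        (measurePreserving_add_right volume s).setLIntegral_comp_preimage_emb
          (measurableEmbedding_addRight s) g _

lemma lintegral_dirichletNorm_comp_add_right (T : ℕ) (s : ℝ) :
    ∫⁻ y in Set.Ioc (-π) π, ENNReal.ofReal (dirichletNorm T (y + s))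
      = ∫⁻ y in Set.Ioc (-π) π, ENNReal.ofReal (dirichletNorm T y) := by
  have h := ((periodic_dirichletNorm T).comp ENNReal.ofReal).setLIntegral_Ioc_comp_add_right
    two_pi_pos (-π) s
  rwa [show -π + 2 * π = π by ring] at h

lemma lintegral_dirichletNorm_le (T : ℕ) (hT : 2 ≤ T) :
    ∫⁻ y in Set.Ioc (-π) π, ENNReal.ofReal (dirichletNorm T y) ≤ ENNReal.ofReal (8 * π * log T) := by
  rw [← ofReal_integral_eq_lintegral_ofReal (continuous_dirichletNorm T).integrableOn_Ioc
    (Filter.Eventually.of_forall (dirichletNorm_nonneg T)),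
    ← intervalIntegral.integral_of_le (by linarith [pi_pos])]
  exact ENNReal.ofReal_le_ofReal (integral_dirichletNorm_le T hT)

lemma lintegral_pi_prod_eq_pow {α : Type*} [MeasurableSpace α] {ν : Measure α} [SigmaFinite ν]
    {g : α → ℝ≥0∞} (hg : Measurable g) (n : ℕ) :
    ∫⁻ x, ∏ i, g (x i) ∂Measure.pi (fun _ : Fin n => ν) = (∫⁻ y, g y ∂ν) ^ n := by
  induction n with
  | zero => simp
  | succ n ih =>
    calc ∫⁻ x, ∏ i, g (x i) ∂Measure.pi (fun _ : Fin (n + 1) => ν)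
        = ∫⁻ z, g z.1 * ∏ i, g (z.2 i) ∂ν.prod (Measure.pi fun _ : Fin n => ν) := by
          rw [← (measurePreserving_piFinSuccAbove (fun _ => ν) 0).lintegral_comp_emb
            (MeasurableEquiv.measurableEmbedding _)]
          simp [Fin.prod_univ_succ, Fin.tail]
      _ = (∫⁻ y, g y ∂ν) ^ (n + 1) := by
          rw [lintegral_prod_mul hg.aemeasurable
            (by fun_prop : Measurable fun r : Fin n → α => ∏ i, g (r i)).aemeasurable,
            ih, pow_succ']

lemma lintegral_pi_prod_compl_mul_sum {G : Type*} [AddCommMonoid G] [MeasurableSpace G]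
    [MeasurableAdd₂ G] {ν : Measure G} [SigmaFinite ν] {g : G → ℝ≥0∞} (hg : Measurable g)
    (hshift : ∀ s, ∫⁻ y, g (y + s) ∂ν = ∫⁻ y, g y ∂ν) {n : ℕ} (j : Fin n) :
    ∫⁻ x, (∏ i ∈ {j}ᶜ, g (x i)) * g (∑ i, x i) ∂Measure.pi (fun _ : Fin n => ν)
      = (∫⁻ y, g y ∂ν) ^ n := by
  cases n with
  | zero => exact j.elim0
  | succ n =>
    have hF : Measurable fun z : G × (Fin n → G) => (∏ i, g (z.2 i)) * g (z.1 + ∑ i, z.2 i) := by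
      fun_prop
    calc ∫⁻ x, (∏ i ∈ {j}ᶜ, g (x i)) * g (∑ i, x i) ∂Measure.pi (fun _ => ν)
        = ∫⁻ z, (∏ i, g (z.2 i)) * g (z.1 + ∑ i, z.2 i)
            ∂ν.prod (Measure.pi fun _ : Fin n => ν) := by
          rw [← (measurePreserving_piFinSuccAbove (fun _ => ν) j).lintegral_comp hF]
          refine lintegral_congr fun x => ?_
          rw [← Fin.image_succAbove_univ, prod_image Fin.succAbove_right_injective.injOn,
            Fin.sum_univ_succAbove _ j]
          rfl
      _ = ∫⁻ r, (∏ i, g (r i)) * ∫⁻ y, g y ∂ν ∂Measure.pi fun _ : Fin n => ν := by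
          rw [lintegral_prod_symm' _ hF]
          refine lintegral_congr fun r => ?_
          rw [← hshift (∑ i, r i), ← lintegral_const_mul _ (by fun_prop)]
      _ = (∫⁻ y, g y ∂ν) ^ (n + 1) := by
          rw [lintegral_mul_const _ (by fun_prop), lintegral_pi_prod_eq_pow hg, pow_succ]

lemma prod_le_mul_sum_prod_compl {ι : Type*} [Fintype ι] [DecidableEq ι] {f : ι → ℝ≥0∞}
    {j : ι} {c : ℝ≥0∞} (hj : f j ≤ c) : ∏ i, f i ≤ c * ∑ k, ∏ i ∈ {k}ᶜ, f i := by
  rw [Fintype.prod_eq_mul_prod_compl j]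
  gcongr
  exact single_le_sum (f := fun k => ∏ i ∈ {k}ᶜ, f i) (fun _ _ => zero_le) (mem_univ j)

lemma lintegral_dirichletNorm_prod_diff_le (m T : ℕ) (hT : 2 ≤ T) {δ : ℝ} (hδ : 0 < δ) :
    ∫⁻ x in Set.univ.pi (fun _ : Fin m => Set.Ioc (-π) π) \ {x | ∀ j, |x j| ≤ δ},
        ENNReal.ofReal ((∏ i, dirichletNorm T (x i)) * dirichletNorm T (∑ i, x i))
      ≤ ENNReal.ofReal (sin (δ / 2))⁻¹ * (m * ENNReal.ofReal (8 * π * log T) ^ m) := by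
  set g : ℝ → ℝ≥0∞ := fun y => ENNReal.ofReal (dirichletNorm T y)
  have hg : Measurable g := by fun_prop
  set c := ENNReal.ofReal (sin (δ / 2))⁻¹
  have hpoint : ∀ x ∈ Set.univ.pi (fun _ : Fin m => Set.Ioc (-π) π) \ {x | ∀ j, |x j| ≤ δ},
      ENNReal.ofReal ((∏ i, dirichletNorm T (x i)) * dirichletNorm T (∑ i, x i))
        ≤ c * ∑ k, (∏ i ∈ {k}ᶜ, g (x i)) * g (∑ i, x i) := by
    rintro x ⟨hxQ, hxD⟩
    obtain ⟨j, hj⟩ : ∃ j, δ < |x j| := by simpa using hxD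
    have hjπ : |x j| ≤ π := abs_le.mpr ⟨(hxQ j trivial).1.le, (hxQ j trivial).2⟩
    rw [ENNReal.ofReal_mul (prod_nonneg fun i _ => dirichletNorm_nonneg T _),
      ENNReal.ofReal_prod_of_nonneg fun i _ => dirichletNorm_nonneg T _, ← sum_mul, ← mul_assoc]
    gcongr
    exact prod_le_mul_sum_prod_compl
      (ENNReal.ofReal_le_ofReal (dirichletNorm_le_inv_sin_of_lt_abs T hδ hj hjπ))
  calc _ ≤ ∫⁻ x in Set.univ.pi (fun _ : Fin m => Set.Ioc (-π) π) \ {x | ∀ j, |x j| ≤ δ},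
          c * ∑ k, (∏ i ∈ {k}ᶜ, g (x i)) * g (∑ i, x i) :=
        setLIntegral_mono (by fun_prop) hpoint
    _ ≤ ∫⁻ x in Set.univ.pi (fun _ : Fin m => Set.Ioc (-π) π),
          c * ∑ k, (∏ i ∈ {k}ᶜ, g (x i)) * g (∑ i, x i) :=
        lintegral_mono_set Set.sdiff_subset
    _ = c * (m * (∫⁻ y in Set.Ioc (-π) π, g y) ^ m) := by
        rw [volume_pi, Measure.restrict_pi_pi, lintegral_const_mul _ (by fun_prop),
          lintegral_finsetSum _ fun k _ => by fun_prop]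
        simp_rw [lintegral_pi_prod_compl_mul_sum hg (lintegral_dirichletNorm_comp_add_right T)]
        simp
    _ ≤ c * (m * ENNReal.ofReal (8 * π * log T) ^ m) := by
        gcongr
        exact lintegral_dirichletNorm_le T hT

lemma integral_dirichletNorm_prod_diff_le (m T : ℕ) (hT : 2 ≤ T) {δ : ℝ} (hδ : 0 < δ)
    (hδπ : δ < π) :
    ∫ x in Set.univ.pi (fun _ : Fin m => Set.Ioc (-π) π) \ {x | ∀ j, |x j| ≤ δ},
        (∏ i, dirichletNorm T (x i)) * dirichletNorm T (∑ i, x i)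
      ≤ (sin (δ / 2))⁻¹ * (m * (8 * π * log T) ^ m) := by
  have hsin : 0 < sin (δ / 2) := sin_pos_of_pos_of_lt_pi (by linarith) (by linarith)
  have hlog : 0 ≤ log T := log_nonneg (by exact_mod_cast (by omega : 1 ≤ T))
  rw [integral_eq_lintegral_of_nonneg_ae (ae_of_all _ fun x =>
    mul_nonneg (prod_nonneg fun i _ => dirichletNorm_nonneg T _) (dirichletNorm_nonneg T _))
    (by fun_prop)]
  refine ENNReal.toReal_le_of_le_ofReal (by positivity)
    ((lintegral_dirichletNorm_prod_diff_le m T hT hδ).trans_eq ?_)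
  rw [← ENNReal.ofReal_pow (by positivity), ← ENNReal.ofReal_natCast,
    ← ENNReal.ofReal_mul (by positivity), ← ENNReal.ofReal_mul (by positivity)]

lemma norm_multipleFejer_eq (m T : ℕ) (x : Fin m → ℝ) :
    ‖((((2 * π) ^ m * (T : ℝ) : ℝ) : ℂ)⁻¹ *
      ∑ t ∈ Fintype.piFinset (fun _ : Fin (m + 1) => Icc 1 T),
        Complex.exp (Complex.I *
          ∑ j : Fin (m + 1),
            (t j : ℂ) * (((Fin.snoc x (-∑ i, x i) : Fin (m + 1) → ℝ) j : ℝ) : ℂ)))‖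
    = ((2 * π) ^ m * T)⁻¹ * ((∏ i, dirichletNorm T (x i)) * dirichletNorm T (∑ i, x i)) := by
  set z : Fin (m + 1) → ℝ := Fin.snoc x (-∑ i, x i)
  have hfactor : ∑ t ∈ Fintype.piFinset (fun _ : Fin (m + 1) => Icc 1 T),
      Complex.exp (Complex.I * ∑ j, (t j : ℂ) * (z j : ℂ))
      = ∏ j, ∑ t ∈ Icc 1 T, Complex.exp (Complex.I * t * z j) := by
    rw [prod_univ_sum]
    refine sum_congr rfl fun t _ => ?_
    rw [mul_sum, Complex.exp_sum]
    exact prod_congr rfl fun j _ => by ring_nf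
  rw [norm_mul, hfactor, norm_prod, norm_inv, Complex.norm_real, Real.norm_of_nonneg (by positivity)]
  change _ * ∏ j, dirichletNorm T (z j) = _
  rw [Fin.prod_univ_castSucc]
  simp [z, dirichletNorm_neg]

theorem stmt_5_general (m : ℕ) :
    ∃ C > 0, ∀ δ : ℝ, 0 < δ → δ < π → ∀ T : ℕ, 2 ≤ T →
      (∫ x in (Set.pi Set.univ (fun _ : Fin m => Set.Ioc (-π) π)) \
            {x : Fin m → ℝ | ∀ j, |x j| ≤ δ},
          ‖((((2 * π) ^ m * (T : ℝ) : ℝ) : ℂ)⁻¹ *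
            ∑ t ∈ Fintype.piFinset (fun _ : Fin (m + 1) => Finset.Icc 1 T),
              Complex.exp (Complex.I *
                ∑ j : Fin (m + 1),
                  (t j : ℂ) * (((Fin.snoc x (-∑ i, x i) : Fin (m + 1) → ℝ) j : ℝ) : ℂ)))‖)
        ≤ C * (Real.log T) ^ m / ((T : ℝ) * Real.sin (δ / 2)) := by
  refine ⟨(m + 1) * 4 ^ m, by positivity, fun δ hδ hδπ T hT => ?_⟩
  have hsin : 0 < sin (δ / 2) := sin_pos_of_pos_of_lt_pi (by linarith) (by linarith)
  simp_rw [norm_multipleFejer_eq, integral_const_mul]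
  calc ((2 * π) ^ m * T)⁻¹ * ∫ x in Set.univ.pi (fun _ : Fin m => Set.Ioc (-π) π) \
          {x | ∀ j, |x j| ≤ δ}, (∏ i, dirichletNorm T (x i)) * dirichletNorm T (∑ i, x i)
      ≤ ((2 * π) ^ m * T)⁻¹ * ((sin (δ / 2))⁻¹ * (m * (8 * π * log T) ^ m)) :=
        mul_le_mul_of_nonneg_left (integral_dirichletNorm_prod_diff_le m T hT hδ hδπ)
          (by positivity)
    _ = m * 4 ^ m * log T ^ m / (T * sin (δ / 2)) := by
        rw [show 8 * π * log T = 2 * π * (4 * log T) by ring, mul_pow (2 * π), mul_pow 4]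
        field_simp
    _ ≤ (m + 1) * 4 ^ m * log T ^ m / (T * sin (δ / 2)) := by
        gcongr
        linarith

/-- For `n = m + 1 ≥ 2` there is `C > 0` (depending only on `n`) such that
for every `δ ∈ (0, π)` and every `T ≥ 2`, the integral of the absolute multiple Fejér
kernel `|Ψ_T^{(n)}|` (with `x_n = -∑_{j<n} x_j`) over the complement in `Π^{n-1}` of
`D = {x : |x_j| ≤ δ for all j}` is at most `C (log T)^{n-1} / (T sin(δ/2))`. -/
theorem stmt_5 (m : ℕ) (hm : 1 ≤ m) :
    ∃ C > 0, ∀ δ : ℝ, 0 < δ → δ < π → ∀ T : ℕ, 2 ≤ T →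
      (∫ x in (Set.pi Set.univ (fun _ : Fin m => Set.Ioc (-π) π)) \
            {x : Fin m → ℝ | ∀ j, |x j| ≤ δ},
          ‖((((2 * π) ^ m * (T : ℝ) : ℝ) : ℂ)⁻¹ *
            ∑ t ∈ Fintype.piFinset (fun _ : Fin (m + 1) => Finset.Icc 1 T),
              Complex.exp (Complex.I *
                ∑ j : Fin (m + 1),
                  (t j : ℂ) * (((Fin.snoc x (-∑ i, x i) : Fin (m + 1) → ℝ) j : ℝ) : ℂ)))‖)
        ≤ C * (Real.log T) ^ m / ((T : ℝ) * Real.sin (δ / 2)) :=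
  stmt_5_general m
end

section
/- For every integer n ≥ 2 and every index j ∈ {1, …, n−1} there exists a constant C > 0 (depending only on n) such that for every integer T ≥ 2, ∫_{Π^{n−1}} |x_j| |Ψ_T^{(n)}(x_1, …, x_n)| dx_1 ⋯ dx_{n−1} ≤ C T^{−1} (log T)^{n−1}, where x_n = −∑_{j=1}^{n−1} x_j. -/
open Real Finset MeasureTheory

/-!
The sum over `t ∈ [1, T]ⁿ` factorises as `∏ᵢ D(yᵢ)` with `D(u) = ∑_{t=1}^T e^{itu}`, and on
`[-π, π]` one has `|D(u)| ≤ min(T, π / |u|)`, so `∫_Π |D| ≤ 2π (1 + log T)`. The weight `|x_j|`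
absorbs the factor `|D(x_j)|`, since `|u| |D(u)| ≤ π`. The remaining `n - 1` factors are `|D|` at
the coordinates of the point obtained from `x` by replacing `x_j` with `x_n = -∑ x_k`. This
replacement is a linear involution, hence preserves volume, and maps `Π^{n-1}` into the cube of
side `2(n-1)π`, over which the product integral is `((n-1) ∫_Π |D|)^{n-1}` by periodicity.
-/

lemma norm_geom_sum_Ico_le {K : Type*} [NormedField K] {z : K} (hz : ‖z‖ ≤ 1) (hz1 : z ≠ 1)
    (m n : ℕ) : ‖∑ i ∈ Ico m n, z ^ i‖ ≤ 2 / ‖z - 1‖ := by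
  have hpow (k : ℕ) : ‖z ^ k‖ ≤ 1 := by rw [norm_pow]; exact pow_le_one₀ (norm_nonneg z) hz
  rcases le_total m n with hmn | hnm
  · rw [geom_sum_Ico hz1 hmn, norm_div]
    gcongr
    calc ‖z ^ n - z ^ m‖ ≤ ‖z ^ n‖ + ‖z ^ m‖ := norm_sub_le _ _
      _ ≤ 2 := by linarith [hpow n, hpow m]
  · rw [Ico_eq_empty_of_le hnm, sum_empty, norm_zero]
    positivity

lemma two_mul_abs_div_pi_le_norm_exp_sub_one {u : ℝ} (hu : |u| ≤ π) :
    2 * |u| / π ≤ ‖Complex.exp (Complex.I * u) - 1‖ := by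
  have habs : |u / 2| ≤ π / 2 := by rw [abs_div, abs_two]; linarith
  have hsin := Real.mul_le_sin (abs_nonneg _) habs
  rw [← abs_sin_eq_sin_abs_of_abs_le_pi (by linarith [pi_pos]), abs_div, abs_two] at hsin
  rw [Complex.norm_exp_I_mul_ofReal_sub_one, norm_mul, Real.norm_eq_abs, Real.norm_eq_abs, abs_two]
  calc 2 * |u| / π = 2 * (2 / π * (|u| / 2)) := by ring
    _ ≤ _ := by gcongr

lemma Function.Periodic.intervalIntegral_neg_natCast_mul {f : ℝ → ℝ} {a : ℝ}
    (hf : Function.Periodic f (2 * a))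
    (hint : ∀ t₁ t₂, IntervalIntegrable f volume t₁ t₂) (k : ℕ) :
    ∫ x in -(k * a)..k * a, f x = k * ∫ x in -a..a, f x := by
  have hk : k * a = -(k * a) + (k : ℤ) • (2 * a) := by rw [zsmul_eq_mul]; push_cast; ring
  have h2a : a = -a + 2 * a := by ring
  have := hf.intervalIntegral_add_zsmul_eq k (-(k * a)) hint
  rwa [← hk, hf.intervalIntegral_add_eq _ (-a), ← h2a, zsmul_eq_mul, Int.cast_natCast] at this

lemma setIntegral_univ_pi_prod {ι 𝕜 : Type*} [Fintype ι] [RCLike 𝕜] {α : ι → Type*}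
    [∀ i, MeasurableSpace (α i)] (μ : ∀ i, Measure (α i)) [∀ i, SigmaFinite (μ i)]
    (f : ∀ i, α i → 𝕜) (s : ∀ i, Set (α i)) :
    ∫ x in Set.univ.pi s, ∏ i, f i (x i) ∂Measure.pi μ = ∏ i, ∫ y in s i, f i y ∂μ i := by
  rw [Measure.restrict_pi_pi]
  exact integral_fintype_prod_eq_prod f

lemma Continuous.integrableOn_univ_pi_Ioc {ι : Type*} [Fintype ι] {F : (ι → ℝ) → ℝ}
    (hF : Continuous F) (a b : ι → ℝ) : IntegrableOn F (Set.univ.pi fun i => Set.Ioc (a i) (b i)) :=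
  (hF.continuousOn.integrableOn_compact (isCompact_univ_pi fun _ => isCompact_Icc)).mono_set
    (Set.pi_mono fun _ _ => Set.Ioc_subset_Icc_self)

lemma LinearMap.abs_det_eq_one_of_involutive {R M : Type*} [CommRing R] [LinearOrder R]
    [IsStrictOrderedRing R] [AddCommGroup M] [Module R M] {f : M →ₗ[R] M}
    (hf : Function.Involutive f) : |LinearMap.det f| = 1 := by
  have hsq : LinearMap.det f * LinearMap.det f = 1 := by
    rw [← LinearMap.det_comp, show f ∘ₗ f = LinearMap.id from LinearMap.ext hf, LinearMap.det_id]
  rcases mul_self_eq_one_iff.mp hsq with h | h <;> simp [h]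

lemma LinearMap.measurePreserving_of_involutive {ι : Type*} [Fintype ι]
    {f : (ι → ℝ) →ₗ[ℝ] ι → ℝ} (hf : Function.Involutive f) : MeasurePreserving f := by
  have hdet := abs_det_eq_one_of_involutive hf
  refine ⟨f.continuous_of_finiteDimensional.measurable, ?_⟩
  rw [Real.map_linearMap_volume_pi_eq_smul_volume_pi (fun h => by simp [h] at hdet), abs_inv,
    hdet]
  simp

section updateNegSum

variable {ι R : Type*} [Fintype ι] [DecidableEq ι] [CommRing R]

def updateNegSum (j : ι) : (ι → R) →ₗ[R] ι → R :=
  LinearMap.pi fun k => if k = j then -∑ i, LinearMap.proj i else LinearMap.proj k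

lemma updateNegSum_apply (j : ι) (x : ι → R) :
    updateNegSum j x = Function.update x j (-∑ k, x k) := by
  ext k
  rcases eq_or_ne k j with rfl | hk <;> simp [updateNegSum, *]

lemma updateNegSum_apply_self (j : ι) (x : ι → R) : updateNegSum j x j = -∑ k, x k := by
  simp [updateNegSum_apply]

lemma updateNegSum_apply_of_ne {j k : ι} (hk : k ≠ j) (x : ι → R) : updateNegSum j x k = x k := by
  simp [updateNegSum_apply, hk]

lemma updateNegSum_involutive (j : ι) : Function.Involutive (updateNegSum (R := R) j) := by
  intro x
  have hsum : ∑ k, updateNegSum j x k = -x j := by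
    rw [updateNegSum_apply, sum_update_of_mem (mem_univ j),
      sum_eq_add_sum_sdiff_singleton_of_mem (mem_univ j) x]
    ring
  ext k
  rcases eq_or_ne k j with rfl | hk
  · rw [updateNegSum_apply_self, hsum, neg_neg]
  · rw [updateNegSum_apply_of_ne hk, updateNegSum_apply_of_ne hk]

lemma abs_updateNegSum_apply_le [LinearOrder R] [IsStrictOrderedRing R] {x : ι → R} {a : R}
    (hx : ∀ k, |x k| ≤ a) (j k : ι) :
    |updateNegSum j x k| ≤ Fintype.card ι * a := by
  rcases eq_or_ne k j with rfl | hk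
  · calc |updateNegSum k x k| ≤ ∑ i, |x i| := by
          rw [updateNegSum_apply_self, abs_neg]; exact abs_sum_le_sum_abs _ _
      _ ≤ ∑ _i, a := sum_le_sum fun i _ => hx i
      _ = Fintype.card ι * a := by simp
  · have hcard : (1 : R) ≤ Fintype.card ι := by exact_mod_cast Fintype.card_pos_iff.mpr ⟨j⟩
    rw [updateNegSum_apply_of_ne hk]
    nlinarith [hx k, abs_nonneg (x k)]

lemma setIntegral_comp_updateNegSum_le {F : (ι → ℝ) → ℝ} (hF : Continuous F) (hF₀ : 0 ≤ F)
    (j : ι) (a : ℝ) :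
    ∫ x in Set.univ.pi fun _ => Set.Ioc (-a) a, F (updateNegSum j x)
      ≤ ∫ u in Set.univ.pi fun _ => Set.Icc (-(Fintype.card ι * a)) (Fintype.card ι * a), F u := by
  set L := updateNegSum (R := ℝ) j
  have hL := LinearMap.measurePreserving_of_involutive (updateNegSum_involutive (R := ℝ) j)
  have hLemb := (MeasurableEquiv.ofInvolutive L (updateNegSum_involutive j)
    hL.measurable).measurableEmbedding
  have hsub : (Set.univ.pi fun _ => Set.Ioc (-a) a) ⊆
      L ⁻¹' Set.univ.pi fun _ => Set.Icc (-(Fintype.card ι * a)) (Fintype.card ι * a) := by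
    intro x hx
    have hxa (k : ι) : |x k| ≤ a := abs_le.mpr ⟨(hx k trivial).1.le, (hx k trivial).2⟩
    exact fun k _ => abs_le.mp (abs_updateNegSum_apply_le hxa j k)
  have hint : IntegrableOn F
      (Set.univ.pi fun _ => Set.Icc (-(Fintype.card ι * a)) (Fintype.card ι * a)) :=
    hF.continuousOn.integrableOn_compact (isCompact_univ_pi fun _ => isCompact_Icc)
  calc ∫ x in Set.univ.pi fun _ => Set.Ioc (-a) a, F (L x)
      ≤ ∫ x in L ⁻¹' Set.univ.pi fun _ => Set.Icc (-(Fintype.card ι * a)) (Fintype.card ι * a),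
          F (L x) :=
        setIntegral_mono_set ((hL.integrableOn_comp_preimage hLemb).mpr hint)
          (Filter.Eventually.of_forall fun x => hF₀ (L x)) hsub.eventuallyLE
    _ = _ := hL.setIntegral_preimage_emb hLemb F _

lemma setIntegral_prod_comp_updateNegSum_le {f : ℝ → ℝ} (hf : Continuous f) (hf₀ : 0 ≤ f)
    {a : ℝ} (ha : 0 ≤ a) (hper : Function.Periodic f (2 * a)) (j : ι) :
    ∫ x in Set.univ.pi fun _ => Set.Ioc (-a) a, ∏ k, f (updateNegSum j x k)
      ≤ (Fintype.card ι * ∫ u in -a..a, f u) ^ Fintype.card ι := by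
  calc _ ≤ ∫ u in Set.univ.pi fun _ => Set.Icc (-(Fintype.card ι * a)) (Fintype.card ι * a),
          ∏ k, f (u k) :=
        setIntegral_comp_updateNegSum_le (continuous_finsetProd _ fun k _ => by fun_prop)
          (fun u => prod_nonneg fun k _ => hf₀ _) j a
    _ = ∏ _k : ι, ∫ u in Set.Icc (-(Fintype.card ι * a)) (Fintype.card ι * a), f u :=
        setIntegral_univ_pi_prod (fun _ => volume) (fun _ => f) _
    _ = _ := by
        rw [prod_const, card_univ, integral_Icc_eq_integral_Ioc,
          ← intervalIntegral.integral_of_le (neg_le_self (by positivity)),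
          hper.intervalIntegral_neg_natCast_mul (hf.intervalIntegrable · ·)]

end updateNegSum

noncomputable def expSum (T : ℕ) (u : ℝ) : ℂ := ∑ t ∈ Icc 1 T, Complex.exp (Complex.I * u) ^ t

namespace expSum

@[fun_prop]
lemma continuous (T : ℕ) : Continuous (expSum T) := by
  unfold expSum; fun_prop

lemma periodic (T : ℕ) : Function.Periodic (expSum T) (2 * π) := by
  intro u
  have : Complex.I * ↑(u + 2 * π) = Complex.I * u + 2 * π * Complex.I := by push_cast; ring
  simp only [expSum, this, Complex.exp_periodic _]

lemma norm_neg (T : ℕ) (u : ℝ) : ‖expSum T (-u)‖ = ‖expSum T u‖ := by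
  rw [← Complex.norm_conj, expSum, expSum, map_sum]
  congr 1
  refine sum_congr rfl fun t _ => ?_
  rw [map_pow, ← Complex.exp_conj]
  simp

lemma norm_le (T : ℕ) (u : ℝ) : ‖expSum T u‖ ≤ T := by
  calc ‖expSum T u‖ ≤ ∑ t ∈ Icc 1 T, ‖Complex.exp (Complex.I * u) ^ t‖ := norm_sum_le _ _
    _ = T := by simp [Complex.norm_exp_I_mul_ofReal]

lemma norm_le_pi_div_abs (T : ℕ) {u : ℝ} (hu0 : u ≠ 0) (hu : |u| ≤ π) :
    ‖expSum T u‖ ≤ π / |u| := by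
  have hlow := two_mul_abs_div_pi_le_norm_exp_sub_one hu
  have hpos : 0 < 2 * |u| / π := by positivity
  have hz1 : Complex.exp (Complex.I * u) ≠ 1 := fun h => by simp [h] at hlow; linarith
  calc ‖expSum T u‖ ≤ 2 / ‖Complex.exp (Complex.I * u) - 1‖ := by
        rw [expSum, ← Ico_add_one_right_eq_Icc]
        exact norm_geom_sum_Ico_le (Complex.norm_exp_I_mul_ofReal u).le hz1 _ _
    _ ≤ 2 / (2 * |u| / π) := by gcongr
    _ = π / |u| := by field_simp

lemma abs_mul_norm_le (T : ℕ) {u : ℝ} (hu : |u| ≤ π) : |u| * ‖expSum T u‖ ≤ π := by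
  rcases eq_or_ne u 0 with rfl | hu0
  · simp [pi_pos.le]
  · calc |u| * ‖expSum T u‖ ≤ |u| * (π / |u|) := by gcongr; exact norm_le_pi_div_abs T hu0 hu
      _ = π := by field_simp

lemma intervalIntegrable_norm (T : ℕ) (a b : ℝ) :
    IntervalIntegrable (fun u => ‖expSum T u‖) volume a b :=
  ((continuous T).norm).intervalIntegrable a b

lemma integral_norm_zero_pi_le {T : ℕ} (hT : 1 ≤ T) :
    ∫ u in (0)..π, ‖expSum T u‖ ≤ π * (1 + log T) := by
  have hT0 : (0 : ℝ) < T := by exact_mod_cast hT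
  have hcut : π / T ≤ π := div_le_self pi_pos.le (by exact_mod_cast hT)
  have hcut0 : 0 < π / T := by positivity
  rw [← intervalIntegral.integral_add_adjacent_intervals (intervalIntegrable_norm T 0 (π / T))
    (intervalIntegrable_norm T _ _)]
  have hnear : ∫ u in (0)..π / T, ‖expSum T u‖ ≤ π := by
    calc ∫ u in (0)..π / T, ‖expSum T u‖ ≤ ∫ _ in (0)..π / T, (T : ℝ) :=
          intervalIntegral.integral_mono_on hcut0.le (intervalIntegrable_norm T _ _)
            intervalIntegrable_const fun u _ => norm_le T u
      _ = π := by rw [intervalIntegral.integral_const, smul_eq_mul, sub_zero]; field_simp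
  have hfar : ∫ u in π / T..π, ‖expSum T u‖ ≤ π * log T := by
    have hzero : (0 : ℝ) ∉ Set.uIcc (π / T) π := by
      rw [Set.uIcc_of_le hcut]; exact fun h => hcut0.not_ge h.1
    calc ∫ u in π / T..π, ‖expSum T u‖ ≤ ∫ u in π / T..π, π * (1 / u) := by
          refine intervalIntegral.integral_mono_on hcut (intervalIntegrable_norm T _ _)
            ((intervalIntegral.intervalIntegrable_one_div (fun u hu => ?_)
              continuousOn_id).const_mul π) fun u hu => ?_
          · exact fun h => hzero (h ▸ hu)
          · have hu0 : 0 < u := hcut0.trans_le hu.1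
            have := norm_le_pi_div_abs T hu0.ne' (by rw [abs_of_pos hu0]; exact hu.2)
            rwa [abs_of_pos hu0, ← mul_one_div] at this
      _ = π * log T := by
          rw [intervalIntegral.integral_const_mul, integral_one_div hzero]
          field_simp
  linarith

lemma integral_norm_le {T : ℕ} (hT : 1 ≤ T) :
    ∫ u in -π..π, ‖expSum T u‖ ≤ 2 * π * (1 + log T) := by
  have heven : ∫ u in -π..0, ‖expSum T u‖ = ∫ u in (0)..π, ‖expSum T u‖ := by
    simpa [norm_neg] using (intervalIntegral.integral_comp_neg (a := 0) (b := π)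
      (fun u => ‖expSum T u‖)).symm
  rw [← intervalIntegral.integral_add_adjacent_intervals (intervalIntegrable_norm T _ 0)
    (intervalIntegrable_norm T _ _), heven]
  linarith [integral_norm_zero_pi_le hT]

lemma integral_norm_le_mul_log {T : ℕ} (hT : 2 ≤ T) :
    ∫ u in -π..π, ‖expSum T u‖ ≤ 6 * π * log T := by
  have hlog : 1 / 2 ≤ log T := by
    have := log_le_log two_pos (show (2 : ℝ) ≤ T by exact_mod_cast hT)
    linarith [log_two_gt_d9]
  nlinarith [integral_norm_le (T := T) (by omega), pi_pos]

end expSum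

lemma sum_piFinset_exp_eq_prod_expSum {ι : Type*} [Fintype ι] [DecidableEq ι] (T : ℕ)
    (y : ι → ℝ) :
    ∑ t ∈ Fintype.piFinset (fun _ : ι => Icc 1 T),
        Complex.exp (Complex.I * ∑ i, (t i : ℂ) * (y i : ℂ)) = ∏ i, expSum T (y i) := by
  simp only [expSum, prod_univ_sum]
  refine sum_congr rfl fun t _ => ?_
  rw [mul_sum, Complex.exp_sum]
  refine prod_congr rfl fun i _ => ?_
  rw [← Complex.exp_nat_mul]
  ring_nf

lemma prod_snoc_neg_sum {M : Type*} [CommMonoid M] {m : ℕ} (φ : ℝ → M) (x : Fin m → ℝ)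
    (j : Fin m) :
    ∏ i : Fin (m + 1), φ ((Fin.snoc x (-∑ k, x k) : Fin (m + 1) → ℝ) i)
      = φ (x j) * ∏ k, φ (updateNegSum j x k) := by
  simp only [Fin.prod_univ_castSucc, Fin.snoc_castSucc, Fin.snoc_last, updateNegSum_apply,
    Function.apply_update (fun _ => φ), prod_update_of_mem (mem_univ j),
    prod_eq_mul_prod_sdiff_singleton_of_mem (mem_univ j) (fun k => φ (x k))]
  ac_rfl

theorem stmt_6_general (m : ℕ) (j : Fin m) :
    ∃ C > 0, ∀ T : ℕ, 2 ≤ T →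
      (∫ x in Set.pi Set.univ (fun _ : Fin m => Set.Ioc (-π) π),
          |x j| * ‖(((2 * π) ^ m * (T : ℝ) : ℝ) : ℂ)⁻¹ *
            ∑ t ∈ Fintype.piFinset (fun _ : Fin (m + 1) => Finset.Icc 1 T),
              Complex.exp (Complex.I *
                ∑ i : Fin (m + 1),
                  (t i : ℂ) * (((Fin.snoc x (-∑ i', x i') : Fin (m + 1) → ℝ) i : ℝ) : ℂ))‖)
        ≤ C * (T : ℝ)⁻¹ * (Real.log T) ^ m := by
  refine ⟨π * (3 * m) ^ m, by have := j.pos; positivity, fun T hT => ?_⟩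
  set c : ℝ := (2 * π) ^ m * T
  set G : (Fin m → ℝ) → ℝ := fun x => ∏ k, ‖expSum T (updateNegSum j x k)‖
  have hbox : ∫ x in Set.univ.pi fun _ => Set.Ioc (-π) π, G x
      ≤ (m * (6 * π * log T)) ^ m := by
    have h := setIntegral_prod_comp_updateNegSum_le (by fun_prop) (fun _ => norm_nonneg _)
      pi_pos.le ((expSum.periodic T).comp norm) j
    have hJ₀ : 0 ≤ ∫ u in -π..π, ‖expSum T u‖ :=
      intervalIntegral.integral_nonneg (neg_le_self pi_pos.le) fun u _ => norm_nonneg _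
    rw [Fintype.card_fin] at h
    exact h.trans (by gcongr; exact expSum.integral_norm_le_mul_log hT)
  calc _ ≤ ∫ x in Set.univ.pi fun _ => Set.Ioc (-π) π, c⁻¹ * (π * G x) := by
        refine integral_mono_of_nonneg (Filter.Eventually.of_forall fun x => by positivity)
          (Continuous.integrableOn_univ_pi_Ioc (by fun_prop) _ _) ?_
        filter_upwards [ae_restrict_mem (MeasurableSet.univ_pi fun _ => measurableSet_Ioc)]
          with x hx
        rw [norm_mul, norm_inv, Complex.norm_real, Real.norm_of_nonneg (by positivity),
          sum_piFinset_exp_eq_prod_expSum, norm_prod, prod_snoc_neg_sum (‖expSum T ·‖) x j,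
          mul_left_comm, ← mul_assoc |x j|]
        gcongr
        exact expSum.abs_mul_norm_le T (abs_le.mpr ⟨(hx j trivial).1.le, (hx j trivial).2⟩)
    _ = c⁻¹ * (π * ∫ x in Set.univ.pi fun _ => Set.Ioc (-π) π, G x) := by
        rw [integral_const_mul, integral_const_mul]
    _ ≤ c⁻¹ * (π * (m * (6 * π * log T)) ^ m) := by gcongr
    _ = π * (3 * m) ^ m * (T : ℝ)⁻¹ * log T ^ m := by
        rw [show (m : ℝ) * (6 * π * log T) = 2 * π * (3 * m * log T) by ring, mul_pow,
          mul_pow (3 * (m : ℝ))]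
        field_simp [c]
        ring

/-- For `n = m + 1 ≥ 2` and each index `j ∈ {1, …, n-1}` there is `C > 0`
(depending only on `n`) such that for every `T ≥ 2`,
`∫_{Π^{n-1}} |x_j| |Ψ_T^{(n)}(x_1, …, x_n)| dx ≤ C T⁻¹ (log T)^{n-1}`, where the multiple
Fejér kernel is evaluated at `x_n = -∑_{j<n} x_j` and `Π = (-π, π]`. -/
theorem stmt_6 (m : ℕ) (hm : 1 ≤ m) (j : Fin m) :
    ∃ C > 0, ∀ T : ℕ, 2 ≤ T →
      (∫ x in Set.pi Set.univ (fun _ : Fin m => Set.Ioc (-π) π),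
          |x j| * ‖(((2 * π) ^ m * (T : ℝ) : ℝ) : ℂ)⁻¹ *
            ∑ t ∈ Fintype.piFinset (fun _ : Fin (m + 1) => Finset.Icc 1 T),
              Complex.exp (Complex.I *
                ∑ i : Fin (m + 1),
                  (t i : ℂ) * (((Fin.snoc x (-∑ i', x i') : Fin (m + 1) → ℝ) i : ℝ) : ℂ))‖)
        ≤ C * (T : ℝ)⁻¹ * (Real.log T) ^ m :=
  stmt_6_general m j
end

section
/- Let m ≥ 0, let 0 = T_0 < T_1 < ⋯ < T_{m+1} = T be integers, let B_1, …, B_{m+1} ∈ ℂ, and let ω = 2π l / T for an integer l that is not divisible by T. Then (1/T) | ∑_{j=1}^{m+1} B_j ∑_{t = T_{j−1}+1}^{T_j} exp(−i ω t) |² ≥ (1 / (T ω²)) | B_1 − B_{m+1} − ∑_{j=1}^{m} (B_j − B_{j+1}) exp(−i ω T_j) |². -/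
open Real Finset

/-! With `z = exp (-iω)`, each regime contributes a geometric series in `z`, and `z ≠ 1`,
`z ^ T = 1` because `T ∤ l`. Summation by parts over the regimes collapses the total to
`-z D / (z - 1)`, with `D` the combination of jumps on the left-hand side, so the periodogram
term equals `|D|² / (T |z - 1|²)`, and `|z - 1| ≤ |ω|` gives the bound. -/

theorem sum_Icc_mul_sub_pred {R : Type*} [CommRing R] (B f : ℕ → R) (m : ℕ) :
    ∑ j ∈ Icc 1 (m + 1), B j * (f j - f (j - 1))
      = B (m + 1) * f (m + 1) - B 1 * f 0 + ∑ j ∈ Icc 1 m, (B j - B (j + 1)) * f j := by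
  induction m with
  | zero => simp [mul_sub]
  | succ n ih =>
    rw [sum_Icc_succ_top (by omega), ih, sum_Icc_succ_top (by omega), Nat.add_sub_cancel]
    ring

theorem geom_sum_Icc_succ {K : Type*} [DivisionRing K] {z : K} (hz : z ≠ 1) {a b : ℕ}
    (hab : a ≤ b) : ∑ t ∈ Icc (a + 1) b, z ^ t = (z ^ (b + 1) - z ^ (a + 1)) / (z - 1) := by
  rw [← Ico_add_one_right_eq_Icc, geom_sum_Ico hz (by omega)]

theorem sum_mul_geom_sum_Icc_of_pow_eq_one {K : Type*} [Field K] {z : K} (hz : z ≠ 1)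
    {m T : ℕ} (hzT : z ^ T = 1) {Tb : ℕ → ℕ} (B : ℕ → K) (h0 : Tb 0 = 0)
    (hlast : Tb (m + 1) = T) (hmono : ∀ j ≤ m, Tb j ≤ Tb (j + 1)) :
    ∑ j ∈ Icc 1 (m + 1), B j * ∑ t ∈ Icc (Tb (j - 1) + 1) (Tb j), z ^ t
      = -z * (B 1 - B (m + 1) - ∑ j ∈ Icc 1 m, (B j - B (j + 1)) * z ^ Tb j) / (z - 1) := by
  have hgeom : ∀ j ∈ Icc 1 (m + 1), B j * ∑ t ∈ Icc (Tb (j - 1) + 1) (Tb j), z ^ t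
      = B j * (z ^ (Tb j + 1) - z ^ (Tb (j - 1) + 1)) / (z - 1) := by
    intro j hj
    obtain ⟨k, rfl⟩ : ∃ k, j = k + 1 := ⟨j - 1, by grind⟩
    rw [Nat.add_sub_cancel, geom_sum_Icc_succ hz (hmono k (by grind)), mul_div_assoc]
  rw [sum_congr rfl hgeom, ← sum_div, sum_Icc_mul_sub_pred B (fun j ↦ z ^ (Tb j + 1)) m]
  simp only [h0, hlast, pow_succ, hzT, ← mul_assoc, ← sum_mul]
  ring

section

open Complex

theorem exp_neg_I_mul_fourier_pow_eq_one {T : ℕ} (hT : T ≠ 0) {l : ℤ} {ω : ℝ}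
    (hω : ω = 2 * π * l / T) : exp (-I * ω) ^ T = 1 := by
  rw [hω, ← Complex.exp_nat_mul,
    show (T : ℂ) * (-I * ↑(2 * π * l / T)) = (-l : ℤ) * (2 * π * I) by push_cast; field_simp]
  exact exp_int_mul_two_pi_mul_I (-l)

theorem exp_neg_I_mul_fourier_ne_one {T : ℕ} (hT : T ≠ 0) {l : ℤ} (hl : ¬ (T : ℤ) ∣ l)
    {ω : ℝ} (hω : ω = 2 * π * l / T) : exp (-I * ω) ≠ 1 := by
  rw [hω, Ne, Complex.exp_eq_one_iff]
  rintro ⟨n, hn⟩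
  refine hl ⟨-n, ?_⟩
  have : (l : ℂ) = T * (-n : ℤ) := by
    push_cast at hn ⊢
    field_simp at hn
    linear_combination -hn
  exact_mod_cast this

theorem norm_exp_neg_I_mul_ofReal_sub_one_le (ω : ℝ) : ‖exp (-I * ω) - 1‖ ≤ |ω| := by
  simpa using norm_exp_I_mul_ofReal_sub_one_le (x := -ω)

end

/-- With break dates `0 = Tb 0 < ⋯ < Tb (m+1) = T`, complex regime means
`B j`, and Fourier frequency `ω = 2πl/T` with `T ∤ l`, the mean contribution to the
periodogram satisfies
`(1/T) |∑_{j=1}^{m+1} B j ∑_{t=Tb(j-1)+1}^{Tb j} exp(-iωt)|²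
  ≥ (1/(Tω²)) |B 1 - B (m+1) - ∑_{j=1}^{m} (B j - B (j+1)) exp(-iω Tb j)|²`. -/
theorem stmt_9 (m T : ℕ) (Tb : ℕ → ℕ) (B : ℕ → ℂ)
    (h0 : Tb 0 = 0) (hlast : Tb (m + 1) = T)
    (hmono : ∀ j, j ≤ m → Tb j < Tb (j + 1))
    (l : ℤ) (hl : ¬ ((T : ℤ) ∣ l)) (ω : ℝ) (hω : ω = 2 * π * (l : ℝ) / (T : ℝ)) :
    (1 / ((T : ℝ) * ω ^ 2)) *
        (norm (B 1 - B (m + 1) -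
          ∑ j ∈ Finset.Icc 1 m,
            (B j - B (j + 1)) * Complex.exp (-Complex.I * (ω : ℂ) * (Tb j : ℂ)))) ^ 2
      ≤ (1 / (T : ℝ)) *
        (norm (∑ j ∈ Finset.Icc 1 (m + 1), B j *
          ∑ t ∈ Finset.Icc (Tb (j - 1) + 1) (Tb j),
            Complex.exp (-Complex.I * (t : ℂ) * (ω : ℂ)))) ^ 2 := by
  have hT : T ≠ 0 := by have := hmono m le_rfl; omega
  set z := Complex.exp (-Complex.I * ω)
  have hz : z ≠ 1 := exp_neg_I_mul_fourier_ne_one hT hl hω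
  have hzT : z ^ T = 1 := exp_neg_I_mul_fourier_pow_eq_one hT hω
  have hz_le : ‖z - 1‖ ^ 2 ≤ ω ^ 2 :=
    (pow_le_pow_left₀ (norm_nonneg _) (norm_exp_neg_I_mul_ofReal_sub_one_le ω) 2).trans_eq
      (sq_abs ω)
  have hexp (n : ℕ) : Complex.exp (-Complex.I * n * ω) = z ^ n := by
    rw [← Complex.exp_nat_mul]; ring_nf
  have hexp' (n : ℕ) : Complex.exp (-Complex.I * ω * n) = z ^ n := by
    rw [← Complex.exp_nat_mul]; ring_nf
  simp only [hexp, hexp']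
  rw [sum_mul_geom_sum_Icc_of_pow_eq_one hz hzT B h0 hlast fun j hj ↦ (hmono j hj).le]
  set D := B 1 - B (m + 1) - ∑ j ∈ Icc 1 m, (B j - B (j + 1)) * z ^ Tb j
  have hz_norm : ‖z‖ = 1 := by simp [z, Complex.norm_exp]
  have hz_sub : 0 < ‖z - 1‖ := norm_pos_iff.mpr (sub_ne_zero.mpr hz)
  calc 1 / (T * ω ^ 2) * ‖D‖ ^ 2 = ‖D‖ ^ 2 / (T * ω ^ 2) := by ring
    _ ≤ ‖D‖ ^ 2 / (T * ‖z - 1‖ ^ 2) := by gcongr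
    _ = 1 / T * ‖-z * D / (z - 1)‖ ^ 2 := by
      rw [norm_div, norm_mul, norm_neg, hz_norm]; ring
end

section
/- For all complex numbers a and b, |exp(a) − 1 − b| ≤ exp(max(|a|, |b|)) · (|a − b| + |b|²/2). -/
/-!
Split `exp a - 1 - b = (exp a - exp b) + (exp b - 1 - b)`. The first term is bounded by the mean
value inequality, `exp` being bounded by `exp (max ‖a‖ ‖b‖)` on the ball containing `a` and `b`.
The second is dominated by the same expression for the real number `‖b‖`, whose Taylor tail
`∑ ‖b‖ ^ (n + 2) / (n + 2)!` is at most `‖b‖ ^ 2 / 2 * exp ‖b‖` because `(n + 2)! ≥ 2 * n!`.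
-/

open Nat

theorem Real.hasSum_exp (x : ℝ) : HasSum (fun n => x ^ n / n !) (Real.exp x) := by
  simpa [Real.exp_eq_exp_ℝ] using NormedSpace.expSeries_div_hasSum_exp x

theorem Nat.two_mul_factorial_le_factorial_add_two (n : ℕ) : 2 * n ! ≤ (n + 2)! := by
  rw [factorial_succ, factorial_succ, ← mul_assoc]
  exact Nat.mul_le_mul_right _ (by nlinarith)

theorem Real.exp_sub_one_sub_le {x : ℝ} (hx : 0 ≤ x) :
    Real.exp x - 1 - x ≤ x ^ 2 / 2 * Real.exp x := by
  have htail : HasSum (fun n => x ^ (n + 2) / (n + 2)!) (Real.exp x - 1 - x) := by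
    simpa [Finset.sum_range_succ, sub_sub] using
      (hasSum_nat_add_iff' 2).mpr (Real.hasSum_exp x)
  refine hasSum_le (fun n => ?_) htail ((Real.hasSum_exp x).mul_left (x ^ 2 / 2))
  have hfac : (2 * n ! : ℝ) ≤ (n + 2)! := by
    exact_mod_cast n.two_mul_factorial_le_factorial_add_two
  calc x ^ (n + 2) / (n + 2)! ≤ x ^ (n + 2) / (2 * n !) := by gcongr
    _ = x ^ 2 / 2 * (x ^ n / n !) := by ring

theorem Complex.norm_exp_sub_one_sub_le (z : ℂ) :
    ‖Complex.exp z - 1 - z‖ ≤ ‖z‖ ^ 2 / 2 * Real.exp ‖z‖ := by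
  calc ‖Complex.exp z - 1 - z‖ ≤ Real.exp ‖z‖ - 1 - ‖z‖ := by
        simpa [Finset.sum_range_succ, sub_sub] using z.norm_exp_sub_sum_le_exp_norm_sub_sum 2
    _ ≤ ‖z‖ ^ 2 / 2 * Real.exp ‖z‖ := Real.exp_sub_one_sub_le (norm_nonneg z)

theorem Complex.norm_exp_sub_exp_le (a b : ℂ) :
    ‖Complex.exp a - Complex.exp b‖ ≤ Real.exp (max ‖a‖ ‖b‖) * ‖a - b‖ := by
  refine (convex_closedBall (0 : ℂ) (max ‖a‖ ‖b‖)).norm_image_sub_le_of_norm_deriv_le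
    (fun z _ => Complex.differentiableAt_exp) (fun z hz => ?_) ?_ ?_
  · rw [Complex.deriv_exp]
    refine (Complex.norm_exp_le_exp_norm z).trans (Real.exp_le_exp.mpr ?_)
    simpa using hz
  · simp
  · simp

/-- For all complex numbers `a` and `b`,
`|exp(a) - 1 - b| ≤ exp(max(|a|, |b|)) (|a - b| + |b|²/2)`. -/
theorem stmt_15 (a b : ℂ) :
    ‖Complex.exp a - 1 - b‖
      ≤ Real.exp (max (‖a‖) (‖b‖)) *
          (‖a - b‖ + ‖b‖ ^ 2 / 2) := by
  have hb : Real.exp ‖b‖ ≤ Real.exp (max ‖a‖ ‖b‖) := Real.exp_le_exp.mpr (le_max_right _ _)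
  calc ‖Complex.exp a - 1 - b‖
      = ‖(Complex.exp a - Complex.exp b) + (Complex.exp b - 1 - b)‖ := by congr 1; ring
    _ ≤ ‖Complex.exp a - Complex.exp b‖ + ‖Complex.exp b - 1 - b‖ := norm_add_le _ _
    _ ≤ Real.exp (max ‖a‖ ‖b‖) * ‖a - b‖ + ‖b‖ ^ 2 / 2 * Real.exp ‖b‖ :=
        add_le_add (Complex.norm_exp_sub_exp_le a b) (Complex.norm_exp_sub_one_sub_le b)
    _ ≤ Real.exp (max ‖a‖ ‖b‖) * (‖a - b‖ + ‖b‖ ^ 2 / 2) := by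
        rw [mul_add, mul_comm (‖b‖ ^ 2 / 2)]
        gcongr
end
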